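/- arXiv:1606.02040 — 3 statements merged into one kernel-verified Lean document; each statement's English description precedes it below -/
import Mathlib

section
/- Let 1 ≤ p < ∞ and let x₁, …, xₙ be finitely supported elements of the James space J_p whose supports (with respect to the canonical unit vectors) are contained in consecutive disjoint intervals of ℕ. Then ‖x₁ + ⋯ + xₙ‖_{J_p}^p ≤ (2^p + 1) · (‖x₁‖_{J_p}^p + ⋯ + ‖xₙ‖_{J_p}^p). -/
/-!
For `k < k'`, disjointness of the supports means that at most two of the `x i` change value
between `k` and `k'`, so convexity of `t ↦ t ^ p` gives
`|S k' - S k| ^ p ≤ 2 ^ (p - 1) * ∑ i, |x i k' - x i k| ^ p` for `S = ∑ i, x i`.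
Summing over the consecutive pairs of an increasing sequence and exchanging the two sums yields
`‖S‖ ^ p ≤ 2 ^ (p - 1) * ∑ i, ‖x i‖ ^ p`, and `2 ^ (p - 1) ≤ 2 ^ p + 1`.
-/

open Filter

/-- The James `p`-variation "norm" of a sequence, as a value in `[0, ∞]`:
the supremum over all finite strictly increasing sequences `p₁ < ⋯ < pₙ` (of length `≥ 2`)
of `(∑ |x(p_{i+1}) - x(p_i)|^p)^(1/p)`. -/
noncomputable def Jnorm (p : ℝ) (x : ℕ → ℝ) : ENNReal :=
  ⨆ (n : ℕ) (f : {g : Fin (n + 2) → ℕ // StrictMono g}),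
    ENNReal.ofReal ((∑ i : Fin (n + 1), |x (f.1 i.succ) - x (f.1 i.castSucc)| ^ p) ^ (1 / p))

noncomputable def variationSum (p : ℝ) (x : ℕ → ℝ) {N : ℕ} (f : Fin (N + 2) → ℕ) : ℝ :=
  ∑ i : Fin (N + 1), |x (f i.succ) - x (f i.castSucc)| ^ p

lemma variationSum_nonneg (p : ℝ) (x : ℕ → ℝ) {N : ℕ} (f : Fin (N + 2) → ℕ) :
    0 ≤ variationSum p x f :=
  Finset.sum_nonneg fun _ _ => Real.rpow_nonneg (abs_nonneg _) p

lemma jnorm_rpow_eq_iSup {p : ℝ} (hp : 0 < p) (x : ℕ → ℝ) :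
    Jnorm p x ^ p =
      ⨆ (N : ℕ) (f : {g : Fin (N + 2) → ℕ // StrictMono g}),
        ENNReal.ofReal (variationSum p x f.1) := by
  have hroot : ∀ s : ℝ, 0 ≤ s → ENNReal.ofReal (s ^ (1 / p)) ^ p = ENNReal.ofReal s := by
    intro s hs
    rw [ENNReal.ofReal_rpow_of_nonneg (by positivity) hp.le, ← Real.rpow_mul hs,
      one_div_mul_cancel hp.ne', Real.rpow_one]
  simp only [Jnorm, ← ENNReal.orderIsoRpow_apply p hp, OrderIso.map_iSup]
  simp only [ENNReal.orderIsoRpow_apply]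
  exact iSup_congr fun N => iSup_congr fun f => hroot _ (variationSum_nonneg p x f.1)

lemma abs_sum_sub_sum_rpow_le {ι : Type*} [Fintype ι] {p : ℝ} (hp : 1 ≤ p) {u v : ι → ℝ}
    (hu : (Function.support u).Subsingleton) (hv : (Function.support v).Subsingleton) :
    |∑ i, v i - ∑ i, u i| ^ p ≤ 2 ^ (p - 1) * ∑ i, |v i - u i| ^ p := by
  classical
  set s := Finset.univ.filter fun i => v i - u i ≠ 0
  have card_support_le {w : ι → ℝ} (hw : (Function.support w).Subsingleton) :
      (Finset.univ.filter fun i => w i ≠ 0).card ≤ 1 :=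
    Finset.card_le_one.2 fun i hi j hj => hw (by simpa using hi) (by simpa using hj)
  have hs : s ⊆ (Finset.univ.filter fun i => u i ≠ 0) ∪ Finset.univ.filter fun i => v i ≠ 0 := by
    intro i
    simp only [s, Finset.mem_union, Finset.mem_filter, Finset.mem_univ, true_and]
    contrapose!
    rintro ⟨hui, hvi⟩
    rw [hui, hvi, sub_zero]
  have hcard : (s.card : ℝ) ≤ 2 := by
    have := (Finset.card_le_card hs).trans (Finset.card_union_le _ _)
    have := card_support_le hu
    have := card_support_le hv
    exact_mod_cast (by omega : s.card ≤ 2)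
  calc |∑ i, v i - ∑ i, u i| ^ p = |∑ i ∈ s, (v i - u i)| ^ p := by
        rw [Finset.sum_filter_ne_zero, Finset.sum_sub_distrib]
    _ ≤ (∑ i ∈ s, |v i - u i|) ^ p := by
        gcongr
        exact Finset.abs_sum_le_sum_abs _ _
    _ ≤ (s.card : ℝ) ^ (p - 1) * ∑ i ∈ s, |v i - u i| ^ p :=
        Real.rpow_sum_le_const_mul_sum_rpow s _ hp
    _ ≤ 2 ^ (p - 1) * ∑ i, |v i - u i| ^ p := by
        gcongr
        exact Finset.subset_univ s

lemma variationSum_sum_le {ι : Type*} [Fintype ι] {p : ℝ} (hp : 1 ≤ p) {x : ι → ℕ → ℝ}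
    (hx : ∀ k, (Function.support fun i => x i k).Subsingleton) {N : ℕ} (f : Fin (N + 2) → ℕ) :
    variationSum p (fun k => ∑ i, x i k) f ≤ 2 ^ (p - 1) * ∑ i, variationSum p (x i) f := by
  simp only [variationSum]
  rw [Finset.sum_comm, Finset.mul_sum]
  exact Finset.sum_le_sum fun j _ => abs_sum_sub_sum_rpow_le hp (hx _) (hx _)

theorem jnorm_sum_rpow_le_of_disjoint {ι : Type*} [Fintype ι] {p : ℝ} (hp : 1 ≤ p)
    {x : ι → ℕ → ℝ} (hx : ∀ k, (Function.support fun i => x i k).Subsingleton) :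
    Jnorm p (fun k => ∑ i, x i k) ^ p ≤ 2 ^ (p - 1) * ∑ i, Jnorm p (x i) ^ p := by
  have hp0 : 0 < p := one_pos.trans_le hp
  simp only [jnorm_rpow_eq_iSup hp0]
  refine iSup₂_le fun N f => ?_
  calc ENNReal.ofReal (variationSum p (fun k => ∑ i, x i k) f.1)
      ≤ ENNReal.ofReal (2 ^ (p - 1) * ∑ i, variationSum p (x i) f.1) :=
        ENNReal.ofReal_le_ofReal (variationSum_sum_le hp hx f.1)
    _ = 2 ^ (p - 1) * ∑ i, ENNReal.ofReal (variationSum p (x i) f.1) := by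
        rw [ENNReal.ofReal_mul (by positivity), ENNReal.ofReal_sum_of_nonneg
          fun i _ => variationSum_nonneg p (x i) f.1, ← ENNReal.ofReal_rpow_of_pos two_pos,
          ENNReal.ofReal_ofNat]
    _ ≤ 2 ^ (p - 1) * ∑ i, ⨆ (N : ℕ) (f : {g : Fin (N + 2) → ℕ // StrictMono g}),
          ENNReal.ofReal (variationSum p (x i) f.1) := by
        gcongr with i
        exact le_iSup₂_of_le N f le_rfl

theorem jnorm_consecutive_sum_le_general (p : ℝ) (hp : 1 ≤ p) (n : ℕ)
    (x : Fin n → ℕ → ℝ) (a b : Fin n → ℕ)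
    (hconsec : ∀ i j : Fin n, i < j → b i < a j)
    (hsupp : ∀ i k, x i k ≠ 0 → a i ≤ k ∧ k ≤ b i) :
    Jnorm p (fun k => ∑ i, x i k) ^ p ≤ ((2 : ENNReal) ^ p + 1) * ∑ i, Jnorm p (x i) ^ p := by
  have hdisjoint : ∀ k, (Function.support fun i => x i k).Subsingleton := by
    intro k i hi j hj
    have hik := hsupp i k hi
    have hjk := hsupp j k hj
    rcases lt_trichotomy i j with h | rfl | h
    · have := hconsec i j h
      omega
    · rfl
    · have := hconsec j i h
      omega
  have hconst : (2 : ENNReal) ^ (p - 1) ≤ 2 ^ p + 1 :=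
    (ENNReal.rpow_le_rpow_of_exponent_le one_le_two (by linarith)).trans le_self_add
  calc Jnorm p (fun k => ∑ i, x i k) ^ p ≤ 2 ^ (p - 1) * ∑ i, Jnorm p (x i) ^ p :=
        jnorm_sum_rpow_le_of_disjoint hp hdisjoint
    _ ≤ ((2 : ENNReal) ^ p + 1) * ∑ i, Jnorm p (x i) ^ p := by gcongr

theorem jnorm_consecutive_sum_le (p : ℝ) (hp : 1 ≤ p) (n : ℕ)
    (x : Fin n → ℕ → ℝ) (a b : Fin n → ℕ)
    (hab : ∀ i, a i ≤ b i)
    (hconsec : ∀ i j : Fin n, i < j → b i < a j)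
    (hsupp : ∀ i k, x i k ≠ 0 → a i ≤ k ∧ k ≤ b i) :
    Jnorm p (fun k => ∑ i, x i k) ^ p ≤ ((2 : ENNReal) ^ p + 1) * ∑ i, Jnorm p (x i) ^ p :=
  jnorm_consecutive_sum_le_general p hp n x a b hconsec hsupp
end

section
/- Let X be a normed space, M a metric space, and f : X → M a coarse Lipschitz map with Lip_∞(f) > 0. Then for every t > 0, ε > 0 and 0 < δ < 1, there exist x, y ∈ X with ‖x − y‖ > t such that f(Mid(x, y, δ)) ⊆ Mid(f(x), f(y), (1+ε)δ). -/
set_option maxHeartbeats 800000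

open Filter

/-- `Lip_s(f) = sup { d(f x, f y) / d(x, y) : d(x, y) ≥ s }`, as a value in `[0,∞]`. -/
noncomputable def cLip {X Y : Type*} [PseudoMetricSpace X] [PseudoMetricSpace Y]
    (f : X → Y) (s : ℝ) : ENNReal :=
  ⨆ (x : X) (y : X) (_ : s ≤ dist x y), ENNReal.ofReal (dist (f x) (f y) / dist x y)

lemma cLip_bound {X Y : Type*} [PseudoMetricSpace X] [PseudoMetricSpace Y]
    {f : X → Y} {s K : ℝ} (hs : 0 < s) (hK : 0 ≤ K) (hle : cLip f s ≤ ENNReal.ofReal K)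
    {u v : X} (hd : s ≤ dist u v) : dist (f u) (f v) ≤ K * dist u v := by
  have h1 : ENNReal.ofReal (dist (f u) (f v) / dist u v) ≤ ENNReal.ofReal K := by
    refine le_trans ?_ hle
    rw [cLip]
    exact le_iSup₂_of_le u v (le_iSup_of_le hd le_rfl)
  have h2 : dist (f u) (f v) / dist u v ≤ K := by
    rwa [ENNReal.ofReal_le_ofReal_iff hK] at h1
  have h3 : 0 < dist u v := lt_of_lt_of_le hs hd
  calc dist (f u) (f v) = (dist (f u) (f v) / dist u v) * dist u v := by field_simp
    _ ≤ K * dist u v := by nlinarith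

lemma cLip_bound' {X M : Type*} [NormedAddCommGroup X] [NormedSpace ℝ X] [PseudoMetricSpace M]
    {f : X → M} {s K : ℝ} (hs : 0 < s) (hK : 0 ≤ K) (hle : cLip f s ≤ ENNReal.ofReal K)
    (u v : X) : dist (f u) (f v) ≤ K * (dist u v + 2 * s) := by
  rcases eq_or_ne u v with rfl | huv
  · simp only [dist_self, zero_add]
    positivity
  rcases le_or_gt s (dist u v) with h | h
  · have := cLip_bound hs hK hle h
    nlinarith [dist_nonneg (x := u) (y := v)]
  · have hvu : v - u ≠ 0 := sub_ne_zero.mpr (Ne.symm huv)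
    have hnorm : (0:ℝ) < ‖v - u‖ := norm_pos_iff.mpr hvu
    set e : X := ‖v - u‖⁻¹ • (v - u) with he_def
    have he : ‖e‖ = 1 := norm_smul_inv_norm hvu
    set w := v + s • e with hw_def
    have hwv : dist w v = s := by
      have h0 : w - v = s • e := by rw [hw_def]; abel
      rw [dist_eq_norm, h0, norm_smul, he, Real.norm_eq_abs, abs_of_pos hs, mul_one]
    have hvueq : ‖v - u‖ • e = v - u := by
      rw [he_def, smul_smul, mul_inv_cancel₀ hnorm.ne', one_smul]
    have hwu : dist w u = dist u v + s := by
      have h1 : w - u = (‖v - u‖ + s) • e := by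
        rw [hw_def, add_smul, hvueq]; abel
      rw [dist_eq_norm, h1, norm_smul, he, Real.norm_eq_abs, mul_one,
        abs_of_pos (by positivity), dist_eq_norm, norm_sub_rev]
    have b1 : dist (f u) (f w) ≤ K * dist u w :=
      cLip_bound hs hK hle (by rw [dist_comm, hwu]; nlinarith [dist_nonneg (x := u) (y := v)])
    have b2 : dist (f w) (f v) ≤ K * dist w v :=
      cLip_bound hs hK hle (by rw [hwv])
    have htri := dist_triangle (f u) (f w) (f v)
    rw [dist_comm u w, hwu] at b1
    rw [hwv] at b2
    nlinarith

lemma exists_pair {X Y : Type*} [PseudoMetricSpace X] [PseudoMetricSpace Y] {f : X → Y} {r b : ℝ}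
    (hr : 0 < r) (hb : 0 ≤ b) (h : ENNReal.ofReal b < cLip f r) :
    ∃ x y : X, r ≤ dist x y ∧ b * dist x y < dist (f x) (f y) := by
  rw [cLip] at h
  simp only [lt_iSup_iff] at h
  obtain ⟨x, y, hd, hlt⟩ := h
  have hpos : 0 < dist x y := lt_of_lt_of_le hr hd
  have hbd : b < dist (f x) (f y) / dist x y := by
    by_contra hc
    push_neg at hc
    exact absurd (ENNReal.ofReal_le_ofReal hc) hlt.not_ge
  refine ⟨x, y, hd, ?_⟩
  have := (div_lt_div_iff_of_pos_right hpos).mpr hbd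
  calc b * dist x y < (dist (f x) (f y) / dist x y) * dist x y := by nlinarith
    _ = dist (f x) (f y) := by field_simp

/-- The approximate midpoint principle: if `f` is coarse Lipschitz with `Lip_∞(f) > 0`, then
approximate midpoint sets between suitably far apart points are mapped into approximate
midpoint sets of the images. -/
theorem coarse_midpoint_principle (X M : Type*) [NormedAddCommGroup X] [NormedSpace ℝ X]
    [MetricSpace M] (f : X → M)
    (hfin : (⨅ s : {s : ℝ // 0 < s}, cLip f s.1) ≠ ⊤)
    (hpos : 0 < ⨅ s : {s : ℝ // 0 < s}, cLip f s.1)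
    (t ε δ : ℝ) (ht : 0 < t) (hε : 0 < ε) (hδ₀ : 0 < δ) (hδ₁ : δ < 1) :
    ∃ x y : X, t < ‖x - y‖ ∧
      ∀ z : X, max ‖x - z‖ ‖y - z‖ ≤ (1 + δ) * ‖x - y‖ / 2 →
        max (dist (f x) (f z)) (dist (f y) (f z)) ≤
          (1 + (1 + ε) * δ) * dist (f x) (f y) / 2 := by
  obtain ⟨Lr, hLrdef⟩ : ∃ Lr : ℝ, Lr = (⨅ s : {s : ℝ // 0 < s}, cLip f s.1).toReal := ⟨_, rfl⟩
  have hLr : 0 < Lr := hLrdef ▸ ENNReal.toReal_pos hpos.ne' hfin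
  have hLeq : ENNReal.ofReal Lr = ⨅ s : {s : ℝ // 0 < s}, cLip f s.1 :=
    hLrdef ▸ ENNReal.ofReal_toReal hfin
  obtain ⟨c, hcdef⟩ : ∃ c : ℝ, c = ε * δ := ⟨_, rfl⟩
  have hc : 0 < c := by rw [hcdef]; positivity
  obtain ⟨θ, hθdef⟩ : ∃ θ : ℝ, θ = c / (4 * (2 + c)) := ⟨_, rfl⟩
  have hθ : 0 < θ := by rw [hθdef]; positivity
  have hθ1 : θ < 1 := by
    rw [hθdef, div_lt_one (by positivity)]; nlinarith
  have hθeq : θ * (4 * (2 + c)) = c := by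
    rw [hθdef]; field_simp
  -- choose s with small cLip
  have hlt : (⨅ s : {s : ℝ // 0 < s}, cLip f s.1) < ENNReal.ofReal ((1 + θ) * Lr) := by
    rw [← hLeq]
    exact ENNReal.ofReal_lt_ofReal_iff (by positivity) |>.mpr (by nlinarith)
  obtain ⟨⟨s, hs⟩, hsK⟩ := iInf_lt_iff.mp hlt
  have hsK' : cLip f s ≤ ENNReal.ofReal ((1 + θ) * Lr) := hsK.le
  have hK : (0:ℝ) ≤ (1 + θ) * Lr := by positivity
  -- choose far-apart good pair
  obtain ⟨r, hrdef⟩ : ∃ r : ℝ, r = max t (16 * s / c) + 1 := ⟨_, rfl⟩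
  have hrt : t < r := by
    have := le_max_left t (16 * s / c)
    rw [hrdef]; linarith
  have hrs : 16 * s / c < r := by
    have := le_max_right t (16 * s / c)
    rw [hrdef]; linarith
  have hr : 0 < r := lt_trans ht hrt
  have hb : (0:ℝ) ≤ (1 - θ) * Lr := by nlinarith
  have hbL : ENNReal.ofReal ((1 - θ) * Lr) < cLip f r := by
    refine lt_of_lt_of_le ?_ (iInf_le (fun s : {s : ℝ // 0 < s} => cLip f s.1) ⟨r, hr⟩)
    rw [← hLeq]
    exact ENNReal.ofReal_lt_ofReal_iff (by positivity) |>.mpr (by nlinarith)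
  obtain ⟨x, y, hdxy, hlow⟩ := exists_pair hr hb hbL
  obtain ⟨D, hDdef⟩ : ∃ D : ℝ, D = dist x y := ⟨_, rfl⟩
  rw [← hDdef] at hdxy hlow
  have hDt : t < D := lt_of_lt_of_le hrt hdxy
  have hD : 0 < D := lt_trans ht hDt
  have hD16 : 16 * s ≤ c * D := by
    have h2 : 16 * s / c < D := lt_of_lt_of_le hrs hdxy
    rw [div_lt_iff₀ hc] at h2
    nlinarith
  refine ⟨x, y, by rw [← dist_eq_norm, ← hDdef]; exact hDt, fun z hz => ?_⟩
  simp only [← dist_eq_norm, ← hDdef] at hz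
  have hz1 : dist x z ≤ (1 + δ) * D / 2 := le_trans (le_max_left _ _) hz
  have hz2 : dist y z ≤ (1 + δ) * D / 2 := le_trans (le_max_right _ _) hz
  -- key scalar inequality
  have hA : θ * (2 + 2 * δ + c) ≤ c / 2 := by
    nlinarith [mul_nonneg hθ.le (show (0:ℝ) ≤ 2 - 2 * δ + c by linarith)]
  have hE : (1 + θ) * (1 + δ) * D + 4 * (1 + θ) * s ≤ (1 + δ + c) * (1 - θ) * D := by
    have h8 : 4 * (1 + θ) * s ≤ 8 * s := by nlinarith
    linarith [mul_le_mul_of_nonneg_left hA hD.le, hD16]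
  have key : (1 + θ) * Lr * ((1 + δ) * D / 2 + 2 * s) ≤ (1 + δ + c) * ((1 - θ) * Lr * D) / 2 := by
    linarith [mul_le_mul_of_nonneg_left hE hLr.le]
  have hcoef : (0:ℝ) ≤ 1 + δ + c := by positivity
  have hfinal : ∀ u : X, dist u z ≤ (1 + δ) * D / 2 →
      dist (f u) (f z) ≤ (1 + (1 + ε) * δ) * dist (f x) (f y) / 2 := by
    intro u hu
    have b1 : dist (f u) (f z) ≤ (1 + θ) * Lr * (dist u z + 2 * s) := cLip_bound' hs hK hsK' u z
    have heq : (1 + (1 + ε) * δ) = 1 + δ + c := by rw [hcdef]; ring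
    rw [heq]
    calc dist (f u) (f z) ≤ (1 + θ) * Lr * (dist u z + 2 * s) := b1
      _ ≤ (1 + θ) * Lr * ((1 + δ) * D / 2 + 2 * s) := by
          have := mul_le_mul_of_nonneg_left (show dist u z + 2*s ≤ (1 + δ) * D / 2 + 2*s by linarith) hK
          linarith
      _ ≤ (1 + δ + c) * ((1 - θ) * Lr * D) / 2 := key
      _ ≤ (1 + δ + c) * dist (f x) (f y) / 2 := by
          have := mul_le_mul_of_nonneg_left hlow.le hcoef
          linarith
  exact max_le (hfinal x hz1) (hfinal y hz2)
end

section
/- Let (X, ‖·‖) be a normed space whose norm satisfies: for all finitely supported x and all y with x ≺ y (consecutive disjoint supports), ‖x + y‖^p ≤ ‖x‖^p + ‖y‖^p (for a fixed 1 < p < ∞, with respect to a Schauder basis). Let x, y ∈ X, δ ∈ (0,1), u = (x+y)/2, v = (x−y)/2. Then there exists N ∈ ℕ such that u + δ^{1/p}‖v‖ B_{E_N} ⊆ Mid(x, y, δ), where E_N is the closed span of basis vectors with index > N. -/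
/-- Midpoint lemma, part (i), in an abstract normed space with a Schauder-type basis `b`
whose norm satisfies an asymptotic upper `p`-estimate. `F N` is the span of
`{b i : i ≤ N}` and `E N` is the closed span of `{b i : i > N}`. -/
theorem midpoint_lower_inclusion (p : ℝ) (hp : 1 < p)
    (X : Type*) [NormedAddCommGroup X] [NormedSpace ℝ X] (b : ℕ → X)
    -- upper p-estimate: if x is finitely supported before y, then ‖x+y‖^p ≤ ‖x‖^p + ‖y‖^p
    (hup : ∀ N : ℕ, ∀ x ∈ Submodule.span ℝ (b '' {i | i ≤ N}),
      ∀ y ∈ closure (Submodule.span ℝ (b '' {i | N < i}) : Set X),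
        ‖x + y‖ ^ p ≤ ‖x‖ ^ p + ‖y‖ ^ p)
    -- basis-type decomposition: every vector splits as a finitely supported part plus an
    -- arbitrarily small tail, with controlled norms (monotonicity of the basis)
    (hdec : ∀ w : X, ∀ lam : ℝ, 0 < lam → ∃ N : ℕ,
      ∃ w₁ ∈ Submodule.span ℝ (b '' {i | i ≤ N}),
      ∃ w₂ ∈ closure (Submodule.span ℝ (b '' {i | N < i}) : Set X),
        w = w₁ + w₂ ∧ ‖w₂‖ ≤ lam * ‖w‖ ∧ ‖w₁‖ ≤ (1 + lam) * ‖w‖)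
    (x y : X) (δ : ℝ) (hδ₀ : 0 < δ) (hδ₁ : δ < 1) :
    ∃ N : ℕ, ∀ z ∈ closure (Submodule.span ℝ (b '' {i | N < i}) : Set X),
      ‖z‖ ≤ δ ^ (1 / p) * ‖((1:ℝ)/2) • (x - y)‖ →
        max ‖x - (((1:ℝ)/2) • (x + y) + z)‖ ‖y - (((1:ℝ)/2) • (x + y) + z)‖ ≤
          (1 + δ) * ‖x - y‖ / 2 := by
  have hp0 : (0:ℝ) < p := lt_trans one_pos hp
  set v : X := ((1:ℝ)/2) • (x - y) with hv
  -- choose lam > 0 with ((1+lam)^p + δ)^(1/p) + lam ≤ 1 + δ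
  obtain ⟨lam, hlam0, hlamlt⟩ :
      ∃ lam : ℝ, 0 < lam ∧ ((1+lam)^p + δ)^(1/p) + lam ≤ 1 + δ := by
    have hcont : ContinuousAt (fun l : ℝ => ((1+l)^p + δ)^(1/p) + l) 0 := by
      have h1 : Continuous fun l : ℝ => ((1+l)^p + δ)^(1/p) + l := by
        apply Continuous.add _ continuous_id
        apply Continuous.rpow_const
        · exact ((continuous_const.add continuous_id).rpow_const
            (fun x => Or.inr hp0.le)).add continuous_const
        · exact fun _ => Or.inr (by positivity)
      exact h1.continuousAt
    have hval : ((1+(0:ℝ))^p + δ)^(1/p) + 0 < 1 + δ := by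
      have h1 : ((1:ℝ)+δ)^(1/p) < (1+δ)^(1:ℝ) :=
        Real.rpow_lt_rpow_of_exponent_lt (by linarith) (by
          rw [div_lt_one hp0]; linarith)
      simpa [Real.rpow_one] using h1
    have hev : ∀ᶠ l in nhds (0:ℝ), ((1+l)^p + δ)^(1/p) + l < 1 + δ :=
      hcont.eventually_lt_const hval
    obtain ⟨l, hl1, hl2⟩ := ((hev.filter_mono nhdsWithin_le_nhds).and
      (eventually_mem_nhdsWithin (s := Set.Ioi (0:ℝ)))).exists
    exact ⟨l, hl2, hl1.le⟩
  obtain ⟨N, v₁, hv₁mem, v₂, hv₂mem, hsum, hv₂, hv₁⟩ := hdec v lam hlam0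
  refine ⟨N, fun z hz hzn => ?_⟩
  set S := Submodule.span ℝ (b '' {i | N < i})
  have key : ∀ z' : X, z' ∈ closure (S : Set X) → ‖z'‖ ≤ δ^(1/p) * ‖v‖ →
      ‖v + z'‖ ≤ (1+δ) * ‖v‖ := by
    intro z' hz' hz'n
    have hA : ‖v₁ + z'‖ ^ p ≤ ‖v₁‖^p + ‖z'‖^p := hup N v₁ hv₁mem z' hz'
    have hrp : (0:ℝ) < 1/p := by positivity
    have hApow : ‖v₁ + z'‖ ≤ (‖v₁‖^p + ‖z'‖^p)^(1/p) := by
      have h := Real.rpow_le_rpow (by positivity) hA hrp.le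
      rwa [← Real.rpow_mul (norm_nonneg _), mul_one_div_cancel hp0.ne',
        Real.rpow_one] at h
    have h1 : ‖v₁‖^p ≤ (1+lam)^p * ‖v‖^p := by
      rw [← Real.mul_rpow (by positivity) (norm_nonneg _)]
      exact Real.rpow_le_rpow (norm_nonneg _) hv₁ hp0.le
    have h2 : ‖z'‖^p ≤ δ * ‖v‖^p := by
      calc ‖z'‖^p ≤ (δ^(1/p) * ‖v‖)^p :=
            Real.rpow_le_rpow (norm_nonneg _) hz'n hp0.le
        _ = δ * ‖v‖^p := by
            rw [Real.mul_rpow (by positivity) (norm_nonneg _),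
              ← Real.rpow_mul hδ₀.le, one_div, inv_mul_cancel₀ hp0.ne',
              Real.rpow_one]
    have h3 : (‖v₁‖^p + ‖z'‖^p)^(1/p) ≤ ((1+lam)^p + δ)^(1/p) * ‖v‖ := by
      calc (‖v₁‖^p + ‖z'‖^p)^(1/p) ≤ (((1+lam)^p + δ) * ‖v‖^p)^(1/p) := by
            apply Real.rpow_le_rpow (by positivity) _ hrp.le
            rw [add_mul]; linarith
        _ = ((1+lam)^p + δ)^(1/p) * ‖v‖ := by
            rw [Real.mul_rpow (by positivity) (by positivity),
              ← Real.rpow_mul (norm_nonneg _), mul_one_div_cancel hp0.ne',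
              Real.rpow_one]
    have h4 : ‖v + z'‖ ≤ ‖v₁ + z'‖ + ‖v₂‖ := by
      calc ‖v + z'‖ = ‖(v₁ + z') + v₂‖ := by rw [hsum]; rw [add_right_comm]
        _ ≤ ‖v₁ + z'‖ + ‖v₂‖ := norm_add_le _ _
    have h5 : (((1+lam)^p + δ)^(1/p) + lam) * ‖v‖ ≤ (1+δ) * ‖v‖ :=
      mul_le_mul_of_nonneg_right hlamlt (norm_nonneg v)
    nlinarith [norm_nonneg v]
  have hzneg : -z ∈ closure (S : Set X) := by
    have : z ∈ S.topologicalClosure := by rwa [← Submodule.topologicalClosure_coe] at hz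
    have h2 := S.topologicalClosure.neg_mem this
    rwa [← Submodule.topologicalClosure_coe]
  have e1 : x - (((1:ℝ)/2) • (x + y) + z) = v + (-z) := by
    rw [hv]; module
  have e2 : y - (((1:ℝ)/2) • (x + y) + z) = -(v + z) := by
    rw [hv]; module
  have hnv : ‖x - y‖ = 2 * ‖v‖ := by
    rw [hv, norm_smul]
    simp [abs_of_nonneg]
  have hzn' : ‖-z‖ ≤ δ^(1/p) * ‖v‖ := by rwa [norm_neg]
  have k1 := key (-z) hzneg hzn'
  have k2 := key z hz hzn
  rw [e1, e2, norm_neg, hnv]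
  rw [max_le_iff]
  constructor <;> [skip; skip] <;> nlinarith
end
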